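/- Let h be a univariate lowpass filter with dilation λ ≥ 2 whose support is contained in {0,1,…,s}, with mask τ(ω) = (1/√λ) Σ_{k=0}^{s} h(k)e^{−ikω} and polyphase vector H(z). Then the function ω ↦ 2 − H*(e^{iλω})H(e^{iλω}) = 2 − Σ_{γ∈Γ*}|τ(ω+γ)|² is a real trigonometric polynomial of the form Σ_{k=−s}^{s} a(k) e^{−ikω}; in particular if it is positive on [−π,π], Fejér–Riesz yields m with m(e^{iλω}) = Σ_{k=0}^{s} b(k)e^{−ikω} and |m(e^{iλω})|² = 2 − H*(e^{iλω})H(e^{iλω}), so the scaled filter associated with m(z)H(z) has support contained in {0,1,…,2s}. -/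

import Mathlib

/-!
Expanding `|τ(x)|²` gives `(1/λ) Σₙ r(n) e^{-inx}` with `r` the autocorrelation of `h`, and
summing over the shifts `x = ω + 2πm/λ` kills every frequency `n` not divisible by `λ`. Hence
`G = 2 - Σ_{λ ∣ n} r(n) e^{-inω}` is a real, even trigonometric polynomial of degree at most
`s`.

Fejér–Riesz: if `q = Σ_{|k| ≤ t} a(k) e^{-ikω} > 0` with `a` real, even and `a(t) ≠ 0`, then
`z^t q` is a polynomial of degree `2t` with real palindromic coefficients, so its roots are
permuted by `r ↦ 1/r̄`, and positivity keeps them off the unit circle. The `t` roots inside the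
disc give `B` with `|B(z)|² = |z^t q| = q` on `|z| = 1`. Finally, `B` times the polynomial of
`h` has degree at most `2s`.
-/

open Complex Real

/-- The refinement mask `τ(ω) = (1/√λ) Σ_{k=0}^{s} h(k) e^{−ikω}` of a
univariate filter `h` supported in `{0, 1, …, s}` with dilation `λ`. -/
noncomputable def mask1D (lam s : ℕ) (h : Fin (s + 1) → ℝ) (ω : ℝ) : ℂ :=
  ((1 / Real.sqrt lam : ℝ) : ℂ) *
    ∑ k : Fin (s + 1), (h k : ℂ) * Complex.exp (-Complex.I * (k : ℂ) * (ω : ℂ))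

/-- The quantity `G(ω) = 2 − H*(e^{iλω})H(e^{iλω}) = 2 − Σ_{γ∈Γ*} |τ(ω+γ)|²`
with `Γ* = {2πm/λ : m = 0, …, λ−1}` (polyphase identity). -/
noncomputable def G1D (lam s : ℕ) (h : Fin (s + 1) → ℝ) (ω : ℝ) : ℝ :=
  2 - ∑ m ∈ Finset.range lam,
        Complex.normSq (mask1D lam s h (ω + 2 * Real.pi * m / lam))

open Polynomial

theorem Complex.exp_neg_I_mul_intCast_mul (k : ℤ) (ω : ℂ) :
    exp (-I * k * ω) = exp (-I * ω) ^ k := by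
  rw [← exp_int_mul]; ring_nf

theorem Complex.exp_neg_I_mul_natCast_mul (k : ℕ) (ω : ℂ) :
    exp (-I * k * ω) = exp (-I * ω) ^ k := by
  rw [← Complex.exp_nat_mul]; ring_nf

theorem Complex.norm_exp_neg_I_mul_ofReal (x : ℝ) : ‖exp (-I * x)‖ = 1 := by
  rw [show -I * x = (-x : ℝ) * I by push_cast; ring]; exact norm_exp_ofReal_mul_I _

theorem norm_multiset_prod {α : Type*} [NormedField α] (m : Multiset α) :
    ‖m.prod‖ = (m.map (‖·‖)).prod :=
  map_multiset_prod normHom m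

theorem Complex.norm_sub_inv_conj {z r : ℂ} (hz : ‖z‖ = 1) (hr : r ≠ 0) :
    ‖z - (starRingEnd ℂ r)⁻¹‖ = ‖z - r‖ / ‖r‖ := by
  have hz0 : z ≠ 0 := by rintro rfl; simp at hz
  have hrconj : starRingEnd ℂ r ≠ 0 := by simpa using hr
  calc ‖z - (starRingEnd ℂ r)⁻¹‖
      = ‖z * starRingEnd ℂ (r - z) / starRingEnd ℂ r‖ := by
        rw [map_sub, ← inv_eq_conj hz]
        congr 1
        field_simp
    _ = ‖z - r‖ / ‖r‖ := by
        rw [norm_div, norm_mul, hz, one_mul, Complex.norm_conj, Complex.norm_conj, norm_sub_rev]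

theorem IsPrimitiveRoot.geom_sum_zpow {K : Type*} [Field K] {ζ : K} {k : ℕ}
    (hζ : IsPrimitiveRoot ζ k) (n : ℤ) :
    ∑ m ∈ Finset.range k, (ζ ^ n) ^ m = if (k : ℤ) ∣ n then (k : K) else 0 := by
  split_ifs with hn
  · simp [(hζ.zpow_eq_one_iff_dvd n).2 hn]
  · have hpow : (ζ ^ n) ^ k = 1 := by
      rw [← zpow_natCast, ← zpow_mul, mul_comm, zpow_mul, zpow_natCast, hζ.pow_eq_one,
        one_zpow]
    rw [geom_sum_eq (mt (hζ.zpow_eq_one_iff_dvd n).1 hn), hpow, sub_self, zero_div]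

theorem Multiset.filter_not_eq_map_filter {α : Type*} {M : Multiset α} {g : α → α}
    {p : α → Prop} [DecidablePred p] (hM : M.map g = M) (hg : ∀ r ∈ M, p (g r) ↔ ¬p r) :
    M.filter (fun r => ¬p r) = (M.filter p).map g := by
  conv_lhs => rw [← hM]
  rw [Multiset.filter_map]
  exact congrArg _ (Multiset.filter_congr fun r hr => (not_congr (hg r hr)).trans not_not)

theorem Polynomial.reverse_X_sub_C {K : Type*} [Field K] {r : K} (hr : r ≠ 0) :
    (X - C r).reverse = C (-r) * (X - C r⁻¹) := by
  have hX : (X : K[X]).reverse = 1 := by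
    rw [show (X : K[X]) = C 1 * X by simp, reverse_mul_X, reverse_C, C_1]
  rw [sub_eq_add_neg, ← map_neg, reverse_add_C, hX, natDegree_X, pow_one, mul_sub, ← C_mul,
    neg_mul, mul_inv_cancel₀ hr, map_neg, map_neg, C_1]
  ring

theorem Polynomial.reverse_prod_X_sub_C {K : Type*} [Field K] {M : Multiset K} (hM : 0 ∉ M) :
    (M.map (X - C ·)).prod.reverse = C (M.map (-·)).prod * (M.map (X - C ·⁻¹)).prod := by
  induction M using Multiset.induction with
  | empty => simpa using reverse_C (1 : K)
  | cons r M ih =>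
    rw [Multiset.mem_cons, not_or] at hM
    simp only [Multiset.map_cons, Multiset.prod_cons]
    rw [reverse_mul_of_domain, reverse_X_sub_C (Ne.symm hM.1), ih hM.2, map_mul]
    ring

theorem Polynomial.roots_reverse {K : Type*} [Field K] {p : K[X]} (hp : p.Splits)
    (h0 : p.coeff 0 ≠ 0) : p.reverse.roots = p.roots.map (·⁻¹) := by
  have hroots : 0 ∉ p.roots := fun h =>
    h0 (zero_isRoot_iff_coeff_zero_eq_zero.1 (mem_roots'.1 h).2)
  have hprod : (p.roots.map (-·)).prod ≠ 0 :=
    Multiset.prod_ne_zero fun h => hroots (by simpa using h)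
  have hlc : p.leadingCoeff ≠ 0 := by
    rw [leadingCoeff_ne_zero]; rintro rfl; exact h0 rfl
  conv_lhs => rw [hp.eq_prod_roots]
  rw [reverse_mul_of_domain, reverse_C, reverse_prod_X_sub_C hroots, ← mul_assoc, ← map_mul,
    roots_C_mul _ (mul_ne_zero hlc hprod)]
  simpa [Multiset.map_map] using roots_multiset_prod_X_sub_C (p.roots.map (·⁻¹))

theorem Polynomial.roots_map_inv_conj {p : ℂ[X]} (hrev : p.reverse = p)
    (hconj : p.map (starRingEnd ℂ) = p) (h0 : p.coeff 0 ≠ 0) :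
    p.roots.map (fun r => (starRingEnd ℂ r)⁻¹) = p.roots := by
  have hsplit := IsAlgClosed.splits p
  have hroots_conj : p.roots.map (starRingEnd ℂ) = p.roots := by
    rw [← hsplit.roots_map, hconj]
  rw [show (fun r => (starRingEnd ℂ r)⁻¹) = (·⁻¹) ∘ starRingEnd ℂ from rfl,
    ← Multiset.map_map, hroots_conj]
  conv_rhs => rw [← hrev]
  exact (roots_reverse hsplit h0).symm

theorem Polynomial.norm_eval_eq_of_roots_eq_add_map {p : ℂ[X]} {M : Multiset ℂ}
    (hroots : p.roots = M + M.map (fun r => (starRingEnd ℂ r)⁻¹)) (h0 : 0 ∉ M) {z : ℂ}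
    (hz : ‖z‖ = 1) :
    ‖p.eval z‖ =
      ‖p.leadingCoeff‖ / (M.map (‖·‖)).prod * (M.map (‖z - ·‖)).prod ^ 2 := by
  have hout :
      (M.map (fun r => ‖z - (starRingEnd ℂ r)⁻¹‖)) = M.map (fun r => ‖z - r‖ / ‖r‖) :=
    Multiset.map_congr rfl fun r hr => norm_sub_inv_conj hz (ne_of_mem_of_not_mem hr h0)
  rw [(IsAlgClosed.splits p).eval_eq_prod_roots, hroots, Multiset.map_add, Multiset.map_map,
    norm_mul, Multiset.prod_add, norm_mul, norm_multiset_prod, norm_multiset_prod,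
    Multiset.map_map, Multiset.map_map]
  simp only [Function.comp_def]
  rw [hout, Multiset.prod_map_div]
  ring

theorem Polynomial.roots_eq_filter_add_map {p : ℂ[X]} (hrev : p.reverse = p)
    (hconj : p.map (starRingEnd ℂ) = p) (h0 : p.coeff 0 ≠ 0)
    (hcircle : ∀ r ∈ p.roots, ‖r‖ ≠ 1) :
    p.roots = p.roots.filter (‖·‖ < 1) +
      (p.roots.filter (‖·‖ < 1)).map (fun r => (starRingEnd ℂ r)⁻¹) := by
  rw [← Multiset.filter_not_eq_map_filter (roots_map_inv_conj hrev hconj h0)]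
  · exact (Multiset.filter_add_not _ _).symm
  intro r hr
  have hr0 : 0 < ‖r‖ := norm_pos_iff.2 fun h => h0 (by
    rw [← zero_isRoot_iff_coeff_zero_eq_zero, ← h]; exact (mem_roots'.1 hr).2)
  rw [norm_inv, norm_conj, inv_lt_one₀ hr0, not_lt]
  exact ⟨le_of_lt, fun h => lt_of_le_of_ne' h (hcircle r hr)⟩

theorem Polynomial.exists_normSq_eval_eq_norm_eval {p : ℂ[X]} (hrev : p.reverse = p)
    (hconj : p.map (starRingEnd ℂ) = p) (h0 : p.coeff 0 ≠ 0)
    (hcircle : ∀ z : ℂ, ‖z‖ = 1 → p.eval z ≠ 0) :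
    ∃ B : ℂ[X], 2 * B.natDegree ≤ p.natDegree ∧
      ∀ z : ℂ, ‖z‖ = 1 → normSq (B.eval z) = ‖p.eval z‖ := by
  set M := p.roots.filter (‖·‖ < 1)
  have hroots : p.roots = M + M.map (fun r => (starRingEnd ℂ r)⁻¹) :=
    roots_eq_filter_add_map hrev hconj h0 fun r hr h1 => hcircle r h1 (mem_roots'.1 hr).2
  have hM0 : 0 ∉ M := fun h =>
    h0 (zero_isRoot_iff_coeff_zero_eq_zero.1 (mem_roots'.1 (Multiset.mem_of_mem_filter h)).2)
  set K := ‖p.leadingCoeff‖ / (M.map (‖·‖)).prod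
  have hK : 0 ≤ K := div_nonneg (norm_nonneg _) (Multiset.prod_nonneg fun x hx => by
    obtain ⟨r, -, rfl⟩ := Multiset.mem_map.1 hx; exact norm_nonneg r)
  refine ⟨C (√K : ℂ) * (M.map (X - C ·)).prod, ?_, fun z hz => ?_⟩
  · have hdeg := (IsAlgClosed.splits p).natDegree_eq_card_roots
    rw [hroots, Multiset.card_add, Multiset.card_map] at hdeg
    have := (natDegree_C_mul_le (√K : ℂ) _).trans (natDegree_multiset_prod_X_sub_C_eq_card M).le
    omega
  calc normSq ((C (√K : ℂ) * (M.map (X - C ·)).prod).eval z)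
      = K * (M.map (‖z - ·‖)).prod ^ 2 := by
        rw [normSq_eq_norm_sq, eval_mul, eval_C, eval_multiset_prod, Multiset.map_map, norm_mul,
          mul_pow, norm_real, Real.norm_of_nonneg (Real.sqrt_nonneg _), Real.sq_sqrt hK,
          norm_multiset_prod, Multiset.map_map]
        simp [Function.comp_def]
    _ = ‖p.eval z‖ := (norm_eval_eq_of_roots_eq_add_map hroots hM0 hz).symm

namespace FejerRiesz

variable (a : ℤ → ℝ) (t : ℕ)

noncomputable def assocPoly : ℂ[X] :=
  ∑ j ∈ Finset.range (2 * t + 1), C (a (j - t) : ℂ) * X ^ j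

theorem coeff_assocPoly (n : ℕ) :
    (assocPoly a t).coeff n = if n ≤ 2 * t then (a (n - t) : ℂ) else 0 := by
  simp [assocPoly]

theorem natDegree_assocPoly (ht : a t ≠ 0) : (assocPoly a t).natDegree = 2 * t := by
  refine natDegree_eq_of_le_of_coeff_ne_zero ?_ ?_
  · rw [natDegree_le_iff_coeff_eq_zero]
    intro n hn
    rw [coeff_assocPoly, if_neg hn.not_ge]
  · simp [coeff_assocPoly, two_mul, ht]

theorem reverse_assocPoly (hsym : ∀ n, a (-n) = a n) (ht : a t ≠ 0) :
    (assocPoly a t).reverse = assocPoly a t := by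
  ext n
  rw [coeff_reverse, natDegree_assocPoly a t ht, coeff_assocPoly, coeff_assocPoly]
  by_cases hn : n ≤ 2 * t
  · rw [revAt_le hn, if_pos (Nat.sub_le _ _), if_pos hn, Nat.cast_sub hn, ← hsym]
    push_cast; ring_nf
  · rw [revAt_eq_self_of_lt (not_le.1 hn)]

theorem map_conj_assocPoly : (assocPoly a t).map (starRingEnd ℂ) = assocPoly a t := by
  ext n
  rw [coeff_map, coeff_assocPoly]
  split_ifs <;> simp

theorem eval_assocPoly (ω : ℝ) :
    (assocPoly a t).eval (exp (-I * ω)) =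
      exp (-I * ω) ^ t * ∑ k ∈ Finset.Icc (-(t : ℤ)) t, (a k : ℂ) * exp (-I * k * ω) := by
  have he : exp (-I * ω) ≠ 0 := exp_ne_zero _
  rw [assocPoly, eval_finsetSum, Finset.mul_sum]
  refine Finset.sum_nbij' (fun j => (j : ℤ) - t) (fun k => (k + t).toNat) ?_ ?_ ?_ ?_ ?_
  all_goals intro j hj; simp only [Finset.mem_range, Finset.mem_Icc] at hj ⊢
  iterate 4 omega
  rw [eval_mul, eval_C, eval_pow, eval_X, exp_neg_I_mul_intCast_mul, mul_left_comm,
    ← zpow_natCast, ← zpow_natCast, ← zpow_add₀ he]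
  congr 2; ring

theorem exists_normSq_eval_eq_of_coeff_ne_zero (hsym : ∀ n, a (-n) = a n) (ht : a t ≠ 0)
    (q : ℝ → ℝ)
    (hq : ∀ ω : ℝ,
      (q ω : ℂ) = ∑ k ∈ Finset.Icc (-(t : ℤ)) t, (a k : ℂ) * exp (-I * k * ω))
    (hpos : ∀ ω, 0 < q ω) :
    ∃ B : ℂ[X], B.natDegree ≤ t ∧ ∀ ω : ℝ, normSq (B.eval (exp (-I * ω))) = q ω := by
  have heval (ω : ℝ) : (assocPoly a t).eval (exp (-I * ω)) = exp (-I * ω) ^ t * q ω := by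
    rw [eval_assocPoly, hq]
  have hcircle (z : ℂ) (hz : ‖z‖ = 1) : (assocPoly a t).eval z ≠ 0 := by
    obtain ⟨θ, rfl⟩ := (norm_eq_one_iff z).1 hz
    rw [show exp (θ * I) = exp (-I * (-θ : ℝ)) by push_cast; ring_nf, heval]
    exact mul_ne_zero (pow_ne_zero _ (Complex.exp_ne_zero _)) (ofReal_ne_zero.2 (hpos _).ne')
  obtain ⟨B, hBdeg, hB⟩ := exists_normSq_eval_eq_norm_eval (reverse_assocPoly a t hsym ht)
    (map_conj_assocPoly a t) (by simpa [coeff_assocPoly, hsym] using ht) hcircle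
  refine ⟨B, by rw [natDegree_assocPoly a t ht] at hBdeg; omega, fun ω => ?_⟩
  rw [hB _ (norm_exp_neg_I_mul_ofReal ω), heval, norm_mul, norm_pow, norm_exp_neg_I_mul_ofReal,
    one_pow, one_mul, norm_real, Real.norm_of_nonneg (hpos ω).le]

theorem exists_normSq_eval_eq (hsym : ∀ n, a (-n) = a n) (q : ℝ → ℝ)
    (hq : ∀ ω : ℝ,
      (q ω : ℂ) = ∑ k ∈ Finset.Icc (-(t : ℤ)) t, (a k : ℂ) * exp (-I * k * ω))
    (hpos : ∀ ω, 0 < q ω) :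
    ∃ B : ℂ[X], B.natDegree ≤ t ∧ ∀ ω : ℝ, normSq (B.eval (exp (-I * ω))) = q ω := by
  induction t with
  | zero =>
    refine exists_normSq_eval_eq_of_coeff_ne_zero a 0 hsym (fun h0 => ?_) q hq hpos
    exact (hpos 0).ne' (by simpa [show a 0 = 0 from h0] using hq 0)
  | succ t ih =>
    by_cases ht : a (t + 1) = 0
    · have hshrink (ω : ℝ) : ∑ k ∈ Finset.Icc (-((t + 1 : ℕ) : ℤ)) (t + 1 : ℕ),
          (a k : ℂ) * exp (-I * k * ω) =
            ∑ k ∈ Finset.Icc (-(t : ℤ)) t, (a k : ℂ) * exp (-I * k * ω) := by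
        refine (Finset.sum_subset (fun k hk => ?_) fun k hk hk' => ?_).symm
        · simp only [Finset.mem_Icc] at hk ⊢; omega
        · simp only [Finset.mem_Icc] at hk hk'
          obtain rfl | rfl : k = (t + 1 : ℕ) ∨ k = -((t + 1 : ℕ) : ℤ) := by omega
          · simp [ht]
          · rw [hsym]; simp [ht]
      obtain ⟨B, hB, hBq⟩ := ih fun ω => (hq ω).trans (hshrink ω)
      exact ⟨B, hB.trans t.le_succ, hBq⟩
    · exact exists_normSq_eval_eq_of_coeff_ne_zero a (t + 1) hsym (by exact_mod_cast ht) q hq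
        hpos

end FejerRiesz

section

variable {s : ℕ} (h : Fin (s + 1) → ℝ)

noncomputable def filterPoly : ℂ[X] := ∑ k : Fin (s + 1), C (h k : ℂ) * X ^ (k : ℕ)

noncomputable def autocorr (n : ℤ) : ℝ :=
  ∑ p ∈ Finset.univ.filter (fun p : Fin (s + 1) × Fin (s + 1) => (p.1 : ℤ) - p.2 = n),
    h p.1 * h p.2

theorem natDegree_filterPoly_le : (filterPoly h).natDegree ≤ s :=
  natDegree_sum_le_of_forall_le _ _ fun k _ =>
    (natDegree_C_mul_X_pow_le _ _).trans (Nat.lt_succ_iff.1 k.isLt)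

theorem autocorr_neg (n : ℤ) : autocorr h (-n) = autocorr h n := by
  refine Finset.sum_nbij' Prod.swap Prod.swap ?_ ?_ (fun _ _ => rfl) (fun _ _ => rfl)
    fun _ _ => mul_comm _ _
  all_goals intro p hp; simp only [Finset.mem_filter, Finset.mem_univ, true_and, Prod.fst_swap,
    Prod.snd_swap] at hp ⊢; omega

theorem mask1D_eq_eval (lam : ℕ) (ω : ℝ) :
    mask1D lam s h ω = ((1 / √lam : ℝ) : ℂ) * (filterPoly h).eval (exp (-I * ω)) := by
  simp only [mask1D, filterPoly, eval_finsetSum, eval_mul, eval_C, eval_pow, eval_X,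
    exp_neg_I_mul_natCast_mul]

theorem normSq_eval_filterPoly {z : ℂ} (hz : ‖z‖ = 1) :
    (normSq ((filterPoly h).eval z) : ℂ) =
      ∑ n ∈ Finset.Icc (-(s : ℤ)) s, (autocorr h n : ℂ) * z ^ n := by
  have hz0 : z ≠ 0 := by rintro rfl; simp at hz
  have hterm (p : Fin (s + 1) × Fin (s + 1)) : (h p.1 : ℂ) * z ^ (p.1 : ℕ) *
      starRingEnd ℂ ((h p.2 : ℂ) * z ^ (p.2 : ℕ)) =
        h p.1 * h p.2 * z ^ ((p.1 : ℤ) - p.2) := by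
    rw [map_mul, map_pow, conj_ofReal, ← inv_eq_conj hz, zpow_sub₀ hz0, zpow_natCast,
      zpow_natCast, inv_pow]
    ring
  simp only [← mul_conj, filterPoly, eval_finsetSum, eval_mul, eval_C, eval_pow, eval_X]
  rw [map_sum, Finset.sum_mul_sum, ← Finset.sum_product', Finset.univ_product_univ,
    ← Finset.sum_fiberwise_of_maps_to
      (g := fun p : Fin (s + 1) × Fin (s + 1) => (p.1 : ℤ) - p.2) (t := Finset.Icc (-(s : ℤ)) s)]
  · refine Finset.sum_congr rfl fun n _ => ?_
    rw [autocorr, ofReal_sum, Finset.sum_mul]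
    refine Finset.sum_congr rfl fun p hp => ?_
    rw [← (Finset.mem_filter.1 hp).2, hterm, ofReal_mul]
  · intro p _
    have := p.1.isLt; have := p.2.isLt
    simp only [Finset.mem_Icc]; omega

end

theorem sum_normSq_mask1D {lam s : ℕ} (hlam : lam ≠ 0) (h : Fin (s + 1) → ℝ) (ω : ℝ) :
    ((∑ m ∈ Finset.range lam, normSq (mask1D lam s h (ω + 2 * π * m / lam)) : ℝ) : ℂ) =
      ∑ n ∈ Finset.Icc (-(s : ℤ)) s,
        ((if (lam : ℤ) ∣ n then autocorr h n else 0 : ℝ) : ℂ) * exp (-I * ω) ^ n := by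
  set ζ := (exp (2 * π * I / lam))⁻¹ with hζdef
  have hζ : IsPrimitiveRoot ζ lam := (isPrimitiveRoot_exp lam hlam).inv
  have hshift (m : ℕ) : exp (-I * (ω + 2 * π * m / lam : ℝ)) = exp (-I * ω) * ζ ^ m := by
    rw [hζdef, ← Complex.exp_neg, ← Complex.exp_nat_mul, ← Complex.exp_add]
    push_cast; ring_nf
  have hlam' : (lam : ℂ) ≠ 0 := Nat.cast_ne_zero.2 hlam
  calc ((∑ m ∈ Finset.range lam, normSq (mask1D lam s h (ω + 2 * π * m / lam)) : ℝ) : ℂ)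
      = ∑ m ∈ Finset.range lam, (lam : ℂ)⁻¹ *
          ∑ n ∈ Finset.Icc (-(s : ℤ)) s,
            (autocorr h n : ℂ) * (exp (-I * ω) * ζ ^ m) ^ n := by
        push_cast
        refine Finset.sum_congr rfl fun m _ => ?_
        rw [mask1D_eq_eval, normSq_mul, normSq_ofReal, ofReal_mul, normSq_eval_filterPoly h
          (norm_exp_neg_I_mul_ofReal _), hshift]
        congr 1
        rw [← sq, div_pow, Real.sq_sqrt (Nat.cast_nonneg _)]
        push_cast; ring
    _ = ∑ n ∈ Finset.Icc (-(s : ℤ)) s, (lam : ℂ)⁻¹ * (autocorr h n * exp (-I * ω) ^ n) *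
          ∑ m ∈ Finset.range lam, (ζ ^ n) ^ m := by
        simp only [← Finset.mul_sum, mul_zpow, ← zpow_natCast, ← zpow_mul]
        rw [Finset.sum_comm]
        simp only [Finset.mul_sum]
        refine Finset.sum_congr rfl fun n _ => Finset.sum_congr rfl fun m _ => ?_
        rw [mul_comm (m : ℤ) n]; ring
    _ = _ := by
        refine Finset.sum_congr rfl fun n _ => ?_
        rw [hζ.geom_sum_zpow]
        split_ifs
        · field_simp
        · simp

noncomputable def G1DCoeff (lam s : ℕ) (h : Fin (s + 1) → ℝ) (n : ℤ) : ℝ :=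
  (if n = 0 then 2 else 0) - if (lam : ℤ) ∣ n then autocorr h n else 0

theorem G1DCoeff_neg (lam s : ℕ) (h : Fin (s + 1) → ℝ) (n : ℤ) :
    G1DCoeff lam s h (-n) = G1DCoeff lam s h n := by
  simp [G1DCoeff, autocorr_neg]

theorem G1D_eq_sum {lam s : ℕ} (hlam : lam ≠ 0) (h : Fin (s + 1) → ℝ) (ω : ℝ) :
    (G1D lam s h ω : ℂ) =
      ∑ n ∈ Finset.Icc (-(s : ℤ)) s, (G1DCoeff lam s h n : ℂ) * exp (-I * n * ω) := by
  rw [G1D, ofReal_sub, sum_normSq_mask1D hlam]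
  simp only [G1DCoeff, ofReal_sub, sub_mul, Finset.sum_sub_distrib, exp_neg_I_mul_intCast_mul]
  congr 1
  simp [apply_ite (fun x : ℝ => (x : ℂ)), ite_mul]

theorem sum_range_coeff_mul_exp {p : ℂ[X]} {n : ℕ} (hp : p.natDegree < n) (ω : ℝ) :
    ∑ k ∈ Finset.range n, p.coeff k * exp (-I * k * ω) = p.eval (exp (-I * ω)) := by
  simp only [eval_eq_sum_range' hp, exp_neg_I_mul_natCast_mul]

/-- `2 − H*(e^{iλω})H(e^{iλω})` is a real trigonometric
polynomial of the form `Σ_{k=−s}^{s} a(k) e^{−ikω}`; and if it is positive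
everywhere, Fejér–Riesz yields `m(e^{iλω}) = Σ_{k=0}^{s} b(k) e^{−ikω}` with
`|m(e^{iλω})|² = 2 − H*(e^{iλω})H(e^{iλω})`, so the mask `m(e^{iλω})τ(ω)` of
the scaled filter `m(z)H(z)` has (filter) support contained in `{0, …, 2s}`. -/
theorem scaled_filter_support (lam s : ℕ) (hlam : 2 ≤ lam)
    (h : Fin (s + 1) → ℝ) :
    (∃ a : ℤ → ℝ, ∀ ω : ℝ,
      ((G1D lam s h ω : ℝ) : ℂ) =
        ∑ k ∈ Finset.Icc (-(s : ℤ)) (s : ℤ),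
          (a k : ℂ) * Complex.exp (-Complex.I * (k : ℂ) * (ω : ℂ))) ∧
    ((∀ ω : ℝ, 0 < G1D lam s h ω) →
      ∃ b : ℕ → ℂ,
        (∀ ω : ℝ,
          Complex.normSq (∑ k ∈ Finset.range (s + 1),
            b k * Complex.exp (-Complex.I * (k : ℂ) * (ω : ℂ))) = G1D lam s h ω) ∧
        ∃ c : ℕ → ℂ, ∀ ω : ℝ,
          (∑ k ∈ Finset.range (s + 1),
              b k * Complex.exp (-Complex.I * (k : ℂ) * (ω : ℂ))) *
            mask1D lam s h ω =
          ((1 / Real.sqrt lam : ℝ) : ℂ) *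
            ∑ k ∈ Finset.range (2 * s + 1),
              c k * Complex.exp (-Complex.I * (k : ℂ) * (ω : ℂ))) := by
  have hG := G1D_eq_sum (by omega : lam ≠ 0) h
  refine ⟨⟨G1DCoeff lam s h, hG⟩, fun hpos => ?_⟩
  obtain ⟨B, hBdeg, hB⟩ :=
    FejerRiesz.exists_normSq_eval_eq _ s (G1DCoeff_neg lam s h) _ hG hpos
  have hBsum := sum_range_coeff_mul_exp (Nat.lt_succ_of_le hBdeg)
  have hprod_deg : (B * filterPoly h).natDegree < 2 * s + 1 :=
    (natDegree_mul_le.trans (add_le_add hBdeg (natDegree_filterPoly_le h))).trans_lt (by omega)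
  refine ⟨B.coeff, fun ω => by rw [hBsum, hB], (B * filterPoly h).coeff, fun ω => ?_⟩
  rw [hBsum, mask1D_eq_eval, sum_range_coeff_mul_exp hprod_deg, eval_mul]
  ring
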